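/- Suppose 𝒞 ⊂ L⁰_c is solid and 𝒫-sensitive with a reduction set 𝒬 ⊂ 𝔓_c(Ω) consisting of supported probability measures. Then the following are equivalent: (1) 𝒞 is order closed; (2) 𝒞 is sequentially order closed; (3) 𝒞 is 𝒬-closed; (4) 𝒞 is locally Q-closed for each Q ∈ 𝒬; (5) j_Q(𝒞) is Q-closed in L⁰_Q for each Q ∈ 𝒬; (6) j_Q(𝒞) is order closed with respect to the Q-a.s. order on L⁰_Q for each Q ∈ 𝒬; (7) j_Q(𝒞) is sequentially order closed with respect to the Q-a.s. order on L⁰_Q for each Q ∈ 𝒬. -/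

import Mathlib

open MeasureTheory Filter Set
open scoped ENNReal

namespace Robust

variable {Ω : Type*} [MeasurableSpace Ω]

/-- `Q` vanishes on every `𝔓`-polar set, i.e. `Q ≪ 𝔓`. -/
def AC (𝔓 : Set (Measure Ω)) (Q : Measure Ω) : Prop :=
  ∀ N : Set Ω, MeasurableSet N → (∀ P ∈ 𝔓, P N = 0) → Q N = 0

/-- `𝔓_c(Ω)`: probability measures vanishing on all `𝔓`-polar sets. -/
def PC (𝔓 : Set (Measure Ω)) : Set (Measure Ω) :=
  {Q | IsProbabilityMeasure Q ∧ AC 𝔓 Q}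

/-- `𝔓`-quasi-sure equality of random variables. -/
def QSEq (𝔓 : Set (Measure Ω)) (f g : Ω → ℝ) : Prop := ∀ P ∈ 𝔓, f =ᵐ[P] g

/-- The `𝔓`-quasi-sure order. -/
def QSLe (𝔓 : Set (Measure Ω)) (f g : Ω → ℝ) : Prop := ∀ P ∈ 𝔓, f ≤ᵐ[P] g

/-- Representatives of elements of `L⁰`: the measurable functions. -/
def L0 (Ω : Type*) [MeasurableSpace Ω] : Set (Ω → ℝ) := {f | Measurable f}

/-- Representatives of elements of the positive cone `L⁰_{c+}`. -/
def L0pos (𝔓 : Set (Measure Ω)) : Set (Ω → ℝ) :=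
  {f | Measurable f ∧ QSLe 𝔓 (fun _ => 0) f}

/-- Representatives of elements of `L^∞_c`. -/
def Linf (𝔓 : Set (Measure Ω)) : Set (Ω → ℝ) :=
  {f | Measurable f ∧ ∃ m : ℝ, 0 < m ∧ QSLe 𝔓 (fun ω => |f ω|) (fun _ => m)}

/-- Representatives of elements of `L^∞_{c+}`. -/
def LinfPos (𝔓 : Set (Measure Ω)) : Set (Ω → ℝ) :=
  {f | f ∈ Linf 𝔓 ∧ QSLe 𝔓 (fun _ => 0) f}

/-- A set of functions representing a set of equivalence classes in `L⁰_c`: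
it consists of measurable functions and is saturated under `𝔓`-q.s. equality. -/
def IsL0Set (𝔓 : Set (Measure Ω)) (𝒞 : Set (Ω → ℝ)) : Prop :=
  𝒞 ⊆ L0 Ω ∧ ∀ f ∈ 𝒞, ∀ g : Ω → ℝ, Measurable g → QSEq 𝔓 f g → g ∈ 𝒞

/-- Function-level version of `j_Q⁻¹ (j_Q 𝒞)` (equivalently, of the subset `j_Q 𝒞` of `L⁰_Q`):
the `Q`-a.s. saturation of `𝒞`. -/
def jSat (Q : Measure Ω) (𝒞 : Set (Ω → ℝ)) : Set (Ω → ℝ) :=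
  {f | Measurable f ∧ ∃ g ∈ 𝒞, f =ᵐ[Q] g}

/-- `𝒬` is a reduction set for `𝒞`. -/
def IsReductionSet (𝔓 𝒬 : Set (Measure Ω)) (𝒞 : Set (Ω → ℝ)) : Prop :=
  𝒬.Nonempty ∧ 𝒬 ⊆ PC 𝔓 ∧ 𝒞 = ⋂ Q ∈ 𝒬, jSat Q 𝒞

/-- `𝒞` is `𝔓`-sensitive. -/
def Sensitive (𝔓 : Set (Measure Ω)) (𝒞 : Set (Ω → ℝ)) : Prop :=
  𝒞 = ⋂ Q ∈ PC 𝔓, jSat Q 𝒞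

/-- `𝒞` is `𝒬`-closed: closed under sequential convergence in `Q`-probability for all `Q ∈ 𝒬`
simultaneously. -/
def QClosedSet (𝒬 : Set (Measure Ω)) (𝒞 : Set (Ω → ℝ)) : Prop :=
  ∀ (X : ℕ → Ω → ℝ) (x : Ω → ℝ), (∀ n, X n ∈ 𝒞) → Measurable x →
    (∀ Q ∈ 𝒬, TendstoInMeasure Q X atTop x) → x ∈ 𝒞

/-- `𝒞` is locally `Q`-closed. -/
def LocallyQClosed (Q : Measure Ω) (𝒞 : Set (Ω → ℝ)) : Prop :=
  ∀ (X : ℕ → Ω → ℝ) (x : Ω → ℝ), (∀ n, X n ∈ 𝒞) → Measurable x →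
    TendstoInMeasure Q X atTop x → ∃ y ∈ 𝒞, x =ᵐ[Q] y

/-- `𝒞` is solid in `L⁰_c` (w.r.t. the quasi-sure order of `𝔓`). -/
def SolidL0 (𝔓 : Set (Measure Ω)) (𝒞 : Set (Ω → ℝ)) : Prop :=
  ∀ f ∈ 𝒞, ∀ g : Ω → ℝ, Measurable g →
    QSLe 𝔓 (fun ω => |g ω|) (fun ω => |f ω|) → g ∈ 𝒞

/-- `𝒞` is solid in `L⁰_{c+}`. -/
def SolidPos (𝔓 : Set (Measure Ω)) (𝒞 : Set (Ω → ℝ)) : Prop :=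
  𝒞 ⊆ L0pos 𝔓 ∧ ∀ f ∈ 𝒞, ∀ g ∈ L0pos 𝔓, QSLe 𝔓 g f → g ∈ 𝒞

/-- `𝒞` is solid (in either of the two senses). -/
def Solid (𝔓 : Set (Measure Ω)) (𝒞 : Set (Ω → ℝ)) : Prop :=
  SolidL0 𝔓 𝒞 ∨ SolidPos 𝔓 𝒞

/-- `f` is the infimum (greatest lower bound) of the family `Y` in the `𝔓`-q.s. order. -/
def IsQSInf (𝔓 : Set (Measure Ω)) {ι : Sort*} (Y : ι → Ω → ℝ) (f : Ω → ℝ) : Prop :=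
  (∀ a, QSLe 𝔓 f (Y a)) ∧
    ∀ g : Ω → ℝ, Measurable g → (∀ a, QSLe 𝔓 g (Y a)) → QSLe 𝔓 g f

/-- `f` is the supremum (least upper bound) of the family `Y` in the `𝔓`-q.s. order. -/
def IsQSSup (𝔓 : Set (Measure Ω)) {ι : Sort*} (Y : ι → Ω → ℝ) (f : Ω → ℝ) : Prop :=
  (∀ a, QSLe 𝔓 (Y a) f) ∧
    ∀ g : Ω → ℝ, Measurable g → (∀ a, QSLe 𝔓 (Y a) g) → QSLe 𝔓 f g

/-- Order convergence of a sequence in `L⁰_c`. -/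
def SeqOrderConv (𝔓 : Set (Measure Ω)) (X : ℕ → Ω → ℝ) (x : Ω → ℝ) : Prop :=
  ∃ Y : ℕ → Ω → ℝ, (∀ n, Measurable (Y n)) ∧
    (∀ m n : ℕ, m ≤ n → QSLe 𝔓 (Y n) (Y m)) ∧
    IsQSInf 𝔓 Y (fun _ => 0) ∧
    ∀ n, QSLe 𝔓 (fun ω => |X n ω - x ω|) (Y n)

/-- `𝒞` is sequentially order closed. -/
def SeqOrderClosed (𝔓 : Set (Measure Ω)) (𝒞 : Set (Ω → ℝ)) : Prop :=
  ∀ (X : ℕ → Ω → ℝ) (x : Ω → ℝ), (∀ n, X n ∈ 𝒞) → Measurable x →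
    SeqOrderConv 𝔓 X x → x ∈ 𝒞

/-- Order convergence of a net in `L⁰_c`. -/
def NetOrderConv (𝔓 : Set (Measure Ω)) {ι : Type*} [Preorder ι]
    (X : ι → Ω → ℝ) (x : Ω → ℝ) : Prop :=
  ∃ Y : ι → Ω → ℝ, (∀ a, Measurable (Y a)) ∧
    (∀ a b : ι, a ≤ b → QSLe 𝔓 (Y b) (Y a)) ∧
    IsQSInf 𝔓 Y (fun _ => 0) ∧
    ∀ a, QSLe 𝔓 (fun ω => |X a ω - x ω|) (Y a)

/-- `𝒞` is order closed (w.r.t. order convergence of nets). -/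
def OrderClosed (𝔓 : Set (Measure Ω)) (𝒞 : Set (Ω → ℝ)) : Prop :=
  ∀ (ι : Type*) [Preorder ι] [IsDirected ι (· ≤ ·)] [Nonempty ι],
    ∀ (X : ι → Ω → ℝ) (x : Ω → ℝ), (∀ a, X a ∈ 𝒞) → Measurable x →
      NetOrderConv 𝔓 X x → x ∈ 𝒞

/-- Order convergence of all (directed) nets is preserved under `j_Q`. -/
def NetOrderConvTransfer (𝔓 : Set (Measure Ω)) (Q : Measure Ω) : Prop :=
  ∀ (ι : Type*) [Preorder ι] [IsDirected ι (· ≤ ·)] [Nonempty ι],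
    ∀ (X : ι → Ω → ℝ) (x : Ω → ℝ), (∀ a, Measurable (X a)) → Measurable x →
      NetOrderConv 𝔓 X x → NetOrderConv {Q} X x

/-- A measure is supported (relative to the `𝔓`-polar sets). -/
def SupportedMeasure (𝔓 : Set (Measure Ω)) (μ : Measure Ω) : Prop :=
  ∃ S : Set Ω, MeasurableSet S ∧ μ Sᶜ = 0 ∧
    ∀ N : Set Ω, MeasurableSet N → μ (N ∩ S) = 0 → ∀ P ∈ 𝔓, P (N ∩ S) = 0

/-- The (possibly infinite) expectation `E_Q[f]` of a (q.s.) non-negative random variable. -/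
noncomputable def EExp (Q : Measure Ω) (f : Ω → ℝ) : ℝ≥0∞ :=
  ∫⁻ ω, ENNReal.ofReal (f ω) ∂Q

/-- The polar `𝒞°_𝒬` of `𝒞` consisting of pairs `(Q, Z)` with `Q ∈ 𝒬` and `Z` in the
set `Zs` of dual test functions (e.g. `L^∞_{c+}` or `L⁰_{c+}`). -/
def polarPairs (𝒬 : Set (Measure Ω)) (Zs 𝒞 : Set (Ω → ℝ)) :
    Set (Measure Ω × (Ω → ℝ)) :=
  {p | p.1 ∈ 𝒬 ∧ p.2 ∈ Zs ∧ ∀ f ∈ 𝒞, EExp p.1 (fun ω => p.2 ω * f ω) ≤ 1}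

/-- The bipolar `𝒞°°_𝒬` of `𝒞`. -/
def bipolarPairs (𝔓 𝒬 : Set (Measure Ω)) (Zs 𝒞 : Set (Ω → ℝ)) : Set (Ω → ℝ) :=
  {f | f ∈ L0pos 𝔓 ∧ ∀ p ∈ polarPairs 𝒬 Zs 𝒞, EExp p.1 (fun ω => p.2 ω * f ω) ≤ 1}

/-- The polar `𝒞^*_𝒬` with a uniform (supremum) constraint. -/
def starPolar (𝔓 𝒬 : Set (Measure Ω)) (𝒞 : Set (Ω → ℝ)) : Set (Ω → ℝ) :=
  {Z | Z ∈ LinfPos 𝔓 ∧ ∀ f ∈ 𝒞, (⨆ Q ∈ 𝒬, EExp Q fun ω => Z ω * f ω) ≤ 1}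

/-- The bipolar `𝒞^{**}_𝒬` with a uniform (supremum) constraint. -/
def starBipolar (𝔓 𝒬 : Set (Measure Ω)) (𝒞 : Set (Ω → ℝ)) : Set (Ω → ℝ) :=
  {f | f ∈ L0pos 𝔓 ∧ ∀ Z ∈ starPolar 𝔓 𝒬 𝒞, (⨆ Q ∈ 𝒬, EExp Q fun ω => Z ω * f ω) ≤ 1}

/-- `ca_c`: finite signed measures vanishing on all `𝔓`-polar sets. -/
def CAc (𝔓 : Set (Measure Ω)) : Set (SignedMeasure Ω) :=
  {ν | ∀ N : Set Ω, MeasurableSet N → (∀ P ∈ 𝔓, P N = 0) → ν.totalVariation N = 0}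

/-- A signed measure is supported if its total variation is. -/
def SupportedSigned (𝔓 : Set (Measure Ω)) (ν : SignedMeasure Ω) : Prop :=
  SupportedMeasure 𝔓 ν.totalVariation

/-- `sca_c`: supported signed measures in `ca_c`. -/
def SCAc (𝔓 : Set (Measure Ω)) : Set (SignedMeasure Ω) :=
  {ν | ν ∈ CAc 𝔓 ∧ SupportedSigned 𝔓 ν}

/-- A signed measure is non-negative. -/
def nonnegSM (ν : SignedMeasure Ω) : Prop := ∀ N : Set Ω, MeasurableSet N → 0 ≤ ν N

/-- The measure associated to a non-negative signed measure (its Jordan positive part). -/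
noncomputable def posMeas (ν : SignedMeasure Ω) : Measure Ω :=
  ν.toJordanDecomposition.posPart

/-- The pairing `∫ f dν` of a function with a signed measure. -/
noncomputable def pairSM (ν : SignedMeasure Ω) (f : Ω → ℝ) : ℝ :=
  ∫ ω, f ω ∂ν.toJordanDecomposition.posPart - ∫ ω, f ω ∂ν.toJordanDecomposition.negPart

/-- The total variation `|ν|` of a signed measure, as a signed measure. -/
noncomputable def tvSigned (ν : SignedMeasure Ω) : SignedMeasure Ω :=
  ν.toJordanDecomposition.posPart.toSignedMeasure +
    ν.toJordanDecomposition.negPart.toSignedMeasure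

/-- `𝔓` is of class (S). -/
def ClassS (𝔓 : Set (Measure Ω)) : Prop :=
  ∃ 𝒬 : Set (Measure Ω), 𝒬 ⊆ PC 𝔓 ∧ (∀ Q ∈ 𝒬, SupportedMeasure 𝔓 Q) ∧
    ∀ N : Set Ω, MeasurableSet N → ((∀ P ∈ 𝔓, P N = 0) ↔ ∀ Q ∈ 𝒬, Q N = 0)

/-- The polar `𝒞°_{ca}` of `𝒞 ⊂ L⁰_{c+}` inside `ca_{c+}` (non-negative members of `ca_c`). -/
def polarCA (𝔓 : Set (Measure Ω)) (𝒞 : Set (Ω → ℝ)) : Set (SignedMeasure Ω) :=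
  {ν | nonnegSM ν ∧ ν ∈ CAc 𝔓 ∧ ∀ f ∈ 𝒞, EExp (posMeas ν) f ≤ 1}

/-- The bipolar `𝒞°°_{ca}`. -/
def bipolarCA (𝔓 : Set (Measure Ω)) (𝒞 : Set (Ω → ℝ)) : Set (Ω → ℝ) :=
  {f | f ∈ L0pos 𝔓 ∧ ∀ ν ∈ polarCA 𝔓 𝒞, EExp (posMeas ν) f ≤ 1}

/-- The polar `𝒞°_{sca}` of `𝒞 ⊂ L⁰_{c+}` inside `sca_{c+}`. -/
def polarSCA (𝔓 : Set (Measure Ω)) (𝒞 : Set (Ω → ℝ)) : Set (SignedMeasure Ω) :=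
  {ν | nonnegSM ν ∧ ν ∈ SCAc 𝔓 ∧ ∀ f ∈ 𝒞, EExp (posMeas ν) f ≤ 1}

/-- The bipolar `𝒞°°_{sca}`. -/
def bipolarSCA (𝔓 : Set (Measure Ω)) (𝒞 : Set (Ω → ℝ)) : Set (Ω → ℝ) :=
  {f | f ∈ L0pos 𝔓 ∧ ∀ ν ∈ polarSCA 𝔓 𝒞, EExp (posMeas ν) f ≤ 1}

/-- The weak topology `σ(M, L^∞_c)` on a set `M` of signed measures. -/
noncomputable def sigmaTop (𝔓 : Set (Measure Ω)) (M : Set (SignedMeasure Ω)) :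
    TopologicalSpace M :=
  TopologicalSpace.induced
    (fun ν : M => fun X : Linf 𝔓 => pairSM ν.1 X.1) inferInstance

/-- The weak topology `σ(𝒳, 𝒴)` on `𝒳 ⊂ L⁰_c` induced by a set `𝒴` of signed measures. -/
noncomputable def sigmaTopDual (𝒳 : Set (Ω → ℝ)) (𝒴 : Set (SignedMeasure Ω)) :
    TopologicalSpace 𝒳 :=
  TopologicalSpace.induced
    (fun f : 𝒳 => fun ν : 𝒴 => pairSM ν.1 f.1) inferInstance

/-- `𝒞` is `𝒬`-stable: it contains every `𝒬`-aggregator of every `𝒬`-coherent family in `𝒞`. -/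
def QStable (𝒬 : Set (Measure Ω)) (𝒞 : Set (Ω → ℝ)) : Prop :=
  ∀ X : Measure Ω → Ω → ℝ, (∀ Q ∈ 𝒬, X Q ∈ 𝒞) →
    ∀ x : Ω → ℝ, Measurable x → (∀ Q ∈ 𝒬, X Q =ᵐ[Q] x) → x ∈ 𝒞

/-!
For a single probability `Q`, order convergence of sequences is `Q`-a.s. convergence, and every
order convergent net has an order convergent subsequence: `L⁰_Q` has the countable sup property,
which is seen by following the net along a sequence that minimises `∫ arctan Y_α dQ`. Hence the
local notions (5)–(7) all say that `j_Q(𝒞)` is closed under a.s. limits of sequences. A supported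
`Q` turns `𝒫`-q.s. order convergence into `Q`-a.s. order convergence, and a reduction set glues
the local statements into global ones. Solidity is what brings (2) down to the local level: a
sequence of `𝒞` converging `Q`-a.s. can be cut off by the indicator of a measurable set of full
`Q`-measure so that it converges everywhere while staying in `𝒞`.
-/

section TailSup

variable {u : ℕ → ℝ}

lemma bddAbove_range_abs_add (hu : Tendsto u atTop (nhds 0)) (n : ℕ) :
    BddAbove (range fun k => |u (n + k)|) :=
  hu.abs.bddAbove_range.mono (by rintro _ ⟨k, rfl⟩; exact ⟨n + k, rfl⟩)

lemma abs_le_iSup_abs_add (hu : Tendsto u atTop (nhds 0)) (n : ℕ) :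
    |u n| ≤ ⨆ k, |u (n + k)| :=
  le_ciSup (bddAbove_range_abs_add hu n) 0

lemma antitone_iSup_abs_add (hu : Tendsto u atTop (nhds 0)) :
    Antitone fun n => ⨆ k, |u (n + k)| := by
  intro m n hmn
  refine ciSup_le fun k => ?_
  have hshift : n + k = m + (n - m + k) := by omega
  rw [hshift]
  exact le_ciSup (bddAbove_range_abs_add hu m) _

lemma tendsto_iSup_abs_add (hu : Tendsto u atTop (nhds 0)) :
    Tendsto (fun n => ⨆ k, |u (n + k)|) atTop (nhds 0) := by
  rw [Metric.tendsto_atTop] at hu ⊢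
  intro ε hε
  obtain ⟨N, hN⟩ := hu (ε / 2) (half_pos hε)
  refine ⟨N, fun n hn => ?_⟩
  have hsup : ⨆ k, |u (n + k)| ≤ ε / 2 := ciSup_le fun k => by
    simpa [Real.dist_eq] using (hN (n + k) (by omega)).le
  rw [Real.dist_eq, sub_zero, abs_of_nonneg (Real.iSup_nonneg fun _ => abs_nonneg _)]
  linarith

end TailSup

section OrderConvergence

variable {𝔓 : Set (Measure Ω)} {Q : Measure Ω}

lemma qsle_singleton {f g : Ω → ℝ} : QSLe {Q} f g ↔ f ≤ᵐ[Q] g :=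
  ⟨fun h => h Q rfl, by rintro h P rfl; exact h⟩

/-- The tail suprema `⨆ k, |X (n + k) - x|` witness the order convergence. -/
lemma seqOrderConv_of_ae_tendsto {X : ℕ → Ω → ℝ} {x : Ω → ℝ}
    (hX : ∀ n, Measurable (X n)) (hx : Measurable x)
    (h : ∀ P ∈ 𝔓, ∀ᵐ ω ∂P, Tendsto (fun n => X n ω) atTop (nhds (x ω))) :
    SeqOrderConv 𝔓 X x := by
  have h0 : ∀ P ∈ 𝔓, ∀ᵐ ω ∂P, Tendsto (fun n => X n ω - x ω) atTop (nhds 0) :=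
    fun P hP => (h P hP).mono fun ω hω => tendsto_sub_nhds_zero_iff.2 hω
  refine ⟨fun n ω => ⨆ k, |X (n + k) ω - x ω|,
    fun n => Measurable.iSup fun k => ((hX _).sub hx).abs, ?_, ⟨?_, ?_⟩, ?_⟩
  · exact fun m n hmn P hP => (h0 P hP).mono fun ω hω => antitone_iSup_abs_add hω hmn
  · exact fun n P _ => ae_of_all _ fun ω => Real.iSup_nonneg fun _ => abs_nonneg _
  · intro g _ hg P hP
    filter_upwards [h0 P hP, ae_all_iff.2 fun n => hg n P hP] with ω hω hgω
    exact ge_of_tendsto' (tendsto_iSup_abs_add hω) hgω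
  · exact fun n P hP => (h0 P hP).mono fun ω hω => abs_le_iSup_abs_add hω n

lemma ae_tendsto_iInf {Y : ℕ → Ω → ℝ} (hanti : ∀ m n, m ≤ n → QSLe {Q} (Y n) (Y m))
    (hnonneg : ∀ n, QSLe {Q} (fun _ => 0) (Y n)) :
    ∀ᵐ ω ∂Q, Tendsto (fun n => Y n ω) atTop (nhds (⨅ n, Y n ω)) := by
  filter_upwards [ae_all_iff.2 fun n => hanti n (n + 1) n.le_succ Q rfl,
    ae_all_iff.2 fun n => hnonneg n Q rfl] with ω hmono h0
  exact tendsto_atTop_ciInf (antitone_nat_of_succ_le hmono) ⟨0, by rintro _ ⟨n, rfl⟩; exact h0 n⟩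

lemma ae_tendsto_zero_of_isQSInf {Y : ℕ → Ω → ℝ} (hY : ∀ n, Measurable (Y n))
    (hanti : ∀ m n, m ≤ n → QSLe {Q} (Y n) (Y m)) (hinf : IsQSInf {Q} Y fun _ => 0) :
    ∀ᵐ ω ∂Q, Tendsto (fun n => Y n ω) atTop (nhds 0) := by
  have hnonneg : ∀ᵐ ω ∂Q, ∀ n, 0 ≤ Y n ω := ae_all_iff.2 fun n => hinf.1 n Q rfl
  have hle : (fun ω => ⨅ n, Y n ω) ≤ᵐ[Q] fun _ => 0 := by
    refine hinf.2 _ (Measurable.iInf hY) (fun n => qsle_singleton.2 ?_) Q rfl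
    filter_upwards [hnonneg] with ω h0
    exact ciInf_le ⟨0, by rintro _ ⟨k, rfl⟩; exact h0 k⟩ n
  filter_upwards [ae_tendsto_iInf hanti hinf.1, hnonneg, hle] with ω hω h0 hleω
  rwa [le_antisymm hleω (le_ciInf h0)] at hω

lemma SeqOrderConv.ae_tendsto {X : ℕ → Ω → ℝ} {x : Ω → ℝ} (h : SeqOrderConv {Q} X x) :
    ∀ᵐ ω ∂Q, Tendsto (fun n => X n ω) atTop (nhds (x ω)) := by
  obtain ⟨Y, hY, hanti, hinf, hdom⟩ := h
  filter_upwards [ae_tendsto_zero_of_isQSInf hY hanti hinf,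
    ae_all_iff.2 fun n => hdom n Q rfl] with ω hYω hdω
  exact tendsto_iff_dist_tendsto_zero.2 <|
    squeeze_zero (fun _ => dist_nonneg) (fun n => (Real.dist_eq _ _).trans_le (hdω n)) hYω

end OrderConvergence

section CountableSup

lemma exists_monotone_ge_seq {ι : Type*} [Preorder ι] [IsDirected ι (· ≤ ·)] (α : ℕ → ι) :
    ∃ β : ℕ → ι, Monotone β ∧ ∀ n, α n ≤ β n := by
  choose c hleft hright using fun a b : ι => exists_ge_ge a b
  let β : ℕ → ι := fun n => Nat.rec (α 0) (fun n b => c b (α (n + 1))) n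
  refine ⟨β, monotone_nat_of_le_succ fun n => hleft _ _, fun n => ?_⟩
  cases n with
  | zero => exact le_rfl
  | succ n => exact hright _ _

lemma exists_monotone_tendsto_ciInf {ι : Type*} [Preorder ι] [IsDirected ι (· ≤ ·)] [Nonempty ι]
    {I : ι → ℝ} (hI : Antitone I) (hb : BddBelow (range I)) :
    ∃ β : ℕ → ι, Monotone β ∧ Tendsto (fun n => I (β n)) atTop (nhds (⨅ a, I a)) := by
  obtain ⟨u, -, hu, hmem⟩ := exists_seq_tendsto_sInf (range_nonempty I) hb
  choose α hα using hmem
  obtain ⟨β, hβ, hαβ⟩ := exists_monotone_ge_seq α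
  exact ⟨β, hβ, tendsto_of_tendsto_of_tendsto_of_le_of_le tendsto_const_nhds hu
    (fun n => ciInf_le hb _) fun n => (hI (hαβ n)).trans_eq (hα n)⟩

lemma abs_arctan_le (y : ℝ) : |Real.arctan y| ≤ Real.pi / 2 :=
  abs_le.2 ⟨(Real.neg_pi_div_two_lt_arctan y).le, (Real.arctan_lt_pi_div_two y).le⟩

variable {μ : Measure Ω} [IsFiniteMeasure μ]

lemma integrable_arctan_comp {f : Ω → ℝ} (hf : Measurable f) :
    Integrable (fun ω => Real.arctan (f ω)) μ :=
  .of_bound (Real.continuous_arctan.measurable.comp hf).aestronglyMeasurable (Real.pi / 2)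
    (ae_of_all _ fun _ => abs_arctan_le _)

lemma tendsto_integral_arctan {F : ℕ → Ω → ℝ} {f : Ω → ℝ} (hF : ∀ n, Measurable (F n))
    (h : ∀ᵐ ω ∂μ, Tendsto (fun n => F n ω) atTop (nhds (f ω))) :
    Tendsto (fun n => ∫ ω, Real.arctan (F n ω) ∂μ) atTop (nhds (∫ ω, Real.arctan (f ω) ∂μ)) :=
  tendsto_integral_of_dominated_convergence (fun _ => Real.pi / 2)
    (fun n => (integrable_arctan_comp (hF n)).aestronglyMeasurable) (integrable_const _)
    (fun _ => ae_of_all _ fun _ => abs_arctan_le _)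
    (h.mono fun _ hω => (Real.continuous_arctan.tendsto _).comp hω)

/-- `arctan` is bounded and strictly increasing, so comparing integrals detects a.e. order. -/
lemma ae_le_of_integral_arctan_le {f g : Ω → ℝ} (hf : Measurable f) (hg : Measurable g)
    (h : ∫ ω, Real.arctan (g ω) ∂μ ≤ ∫ ω, Real.arctan (min (f ω) (g ω)) ∂μ) : g ≤ᵐ[μ] f := by
  have hint_g := integrable_arctan_comp (μ := μ) hg
  have hint_min := integrable_arctan_comp (μ := μ) (hf.min hg)
  have hmin_le : ∀ ω, Real.arctan (min (f ω) (g ω)) ≤ Real.arctan (g ω) :=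
    fun ω => Real.arctan_mono (min_le_right _ _)
  have hdiff_nonneg : 0 ≤ᵐ[μ] fun ω => Real.arctan (g ω) - Real.arctan (min (f ω) (g ω)) :=
    ae_of_all _ fun ω => sub_nonneg.2 (hmin_le ω)
  have hdiff_zero : ∫ ω, Real.arctan (g ω) - Real.arctan (min (f ω) (g ω)) ∂μ = 0 := by
    rw [integral_sub hint_g hint_min]
    exact le_antisymm (sub_nonpos.2 h) (sub_nonneg.2 (integral_mono hint_min hint_g hmin_le))
  filter_upwards [(integral_eq_zero_iff_of_nonneg_ae hdiff_nonneg
    (hint_g.sub hint_min)).1 hdiff_zero] with ω hω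
  have hmin : min (f ω) (g ω) = g ω := Real.arctan_injective (sub_eq_zero.1 hω).symm
  exact min_eq_right_iff.1 hmin

/-- The countable sup property of `L⁰_μ`. -/
lemma IsQSInf.exists_monotone_seq {ι : Type*} [Preorder ι] [IsDirected ι (· ≤ ·)] [Nonempty ι]
    {Y : ι → Ω → ℝ} (hY : ∀ a, Measurable (Y a)) (hanti : ∀ a b, a ≤ b → QSLe {μ} (Y b) (Y a))
    (hinf : IsQSInf {μ} Y fun _ => 0) :
    ∃ β : ℕ → ι, Monotone β ∧ IsQSInf {μ} (fun n => Y (β n)) fun _ => 0 := by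
  set I : ι → ℝ := fun a => ∫ ω, Real.arctan (Y a ω) ∂μ
  have hIanti : Antitone I := fun a b hab => integral_mono_ae (integrable_arctan_comp (hY b))
    (integrable_arctan_comp (hY a)) ((hanti a b hab μ rfl).mono fun ω h => Real.arctan_mono h)
  have hIbdd : BddBelow (range I) := ⟨0, by
    rintro _ ⟨a, rfl⟩
    exact integral_nonneg_of_ae <| (hinf.1 a μ rfl).mono fun ω h => by
      simpa using Real.arctan_mono h⟩
  obtain ⟨β, hβ, hIβ⟩ := exists_monotone_tendsto_ciInf hIanti hIbdd
  have hantiβ : ∀ m n, m ≤ n → QSLe {μ} (Y (β n)) (Y (β m)) :=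
    fun m n hmn => hanti _ _ (hβ hmn)
  set Z : Ω → ℝ := fun ω => ⨅ n, Y (β n) ω
  have hZ : Measurable Z := Measurable.iInf fun n => hY (β n)
  have hlim := ae_tendsto_iInf hantiβ fun n => hinf.1 (β n)
  have hIZ : ∫ ω, Real.arctan (Z ω) ∂μ = ⨅ a, I a :=
    tendsto_nhds_unique (tendsto_integral_arctan (fun n => hY (β n)) hlim) hIβ
  have hZ_le : ∀ a, QSLe {μ} Z (Y a) := by
    intro a
    have hmin_ge : ∀ n, ⨅ b, I b ≤ ∫ ω, Real.arctan (min (Y a ω) (Y (β n) ω)) ∂μ := by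
      intro n
      obtain ⟨c, hac, hβc⟩ := exists_ge_ge a (β n)
      refine (ciInf_le hIbdd c).trans (integral_mono_ae (integrable_arctan_comp (hY c))
        (integrable_arctan_comp ((hY a).min (hY (β n)))) ?_)
      filter_upwards [hanti a c hac μ rfl, hanti (β n) c hβc μ rfl] with ω h₁ h₂
      exact Real.arctan_mono (le_min h₁ h₂)
    have hmin_lim := tendsto_integral_arctan (fun n => (hY a).min (hY (β n)))
      (hlim.mono fun ω hω => tendsto_const_nhds.min hω)
    exact qsle_singleton.2 <| ae_le_of_integral_arctan_le (hY a) hZ <|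
      hIZ.trans_le (ge_of_tendsto hmin_lim (.of_forall hmin_ge))
  refine ⟨β, hβ, fun n => hinf.1 (β n), fun g _ hg => qsle_singleton.2 ?_⟩
  filter_upwards [ae_all_iff.2 fun n => hg n μ rfl, hinf.2 Z hZ hZ_le μ rfl] with ω hgω hZω
  exact (le_ciInf hgω).trans hZω

lemma NetOrderConv.exists_seqOrderConv {ι : Type*} [Preorder ι] [IsDirected ι (· ≤ ·)]
    [Nonempty ι] {X : ι → Ω → ℝ} {x : Ω → ℝ} (h : NetOrderConv {μ} X x) :
    ∃ β : ℕ → ι, SeqOrderConv {μ} (fun n => X (β n)) x := by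
  obtain ⟨Y, hY, hanti, hinf, hdom⟩ := h
  obtain ⟨β, hβ, hinfβ⟩ := hinf.exists_monotone_seq hY hanti
  exact ⟨β, fun n => Y (β n), fun n => hY (β n), fun m n hmn => hanti _ _ (hβ hmn), hinfβ,
    fun n => hdom (β n)⟩

end CountableSup

section Closedness

variable {𝔓 : Set (Measure Ω)} {D : Set (Ω → ℝ)}

lemma OrderClosed.seqOrderClosed (h : OrderClosed 𝔓 D) : SeqOrderClosed 𝔓 D := by
  intro X x hX hx ⟨Y, hY, hanti, hinf, hdom⟩
  exact h (ULift ℕ) (fun a => X a.down) x (fun a => hX a.down) hx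
    ⟨fun a => Y a.down, fun a => hY a.down, fun a b hab => hanti a.down b.down hab,
     ⟨fun a => hinf.1 a.down, fun g hg hgle => hinf.2 g hg fun n => hgle ⟨n⟩⟩,
     fun a => hdom a.down⟩

variable {Q : Measure Ω}

lemma orderClosed_singleton_iff [IsFiniteMeasure Q] :
    OrderClosed {Q} D ↔ SeqOrderClosed {Q} D := by
  refine ⟨OrderClosed.seqOrderClosed, fun h ι _ _ _ X x hX hx hconv => ?_⟩
  obtain ⟨β, hβ⟩ := hconv.exists_seqOrderConv
  exact h _ x (fun n => hX (β n)) hx hβ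

lemma qClosedSet_singleton_iff [IsFiniteMeasure Q] (hD : D ⊆ L0 Ω) :
    QClosedSet {Q} D ↔ SeqOrderClosed {Q} D := by
  constructor
  · intro h X x hX hx hconv
    refine h X x hX hx ?_
    rintro _ rfl
    exact tendstoInMeasure_of_tendsto_ae (fun n => (hD (hX n)).aestronglyMeasurable)
      hconv.ae_tendsto
  · intro h X x hX hx hconv
    obtain ⟨ns, -, hns⟩ := (hconv Q rfl).exists_seq_tendsto_ae
    exact h _ x (fun n => hX (ns n)) hx <|
      seqOrderConv_of_ae_tendsto (fun n => hD (hX (ns n))) hx (by rintro _ rfl; exact hns)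

variable {𝒞 : Set (Ω → ℝ)}

lemma jSat_subset_L0 : jSat Q 𝒞 ⊆ L0 Ω := fun _ hf => hf.1

lemma subset_jSat (h𝒞 : 𝒞 ⊆ L0 Ω) : 𝒞 ⊆ jSat Q 𝒞 := fun f hf => ⟨h𝒞 hf, f, hf, .rfl⟩

lemma locallyQClosed_iff (h𝒞 : 𝒞 ⊆ L0 Ω) :
    LocallyQClosed Q 𝒞 ↔ QClosedSet {Q} (jSat Q 𝒞) := by
  constructor
  · intro h X x hX hx hconv
    choose g hg hXg using fun n => (hX n).2
    obtain ⟨y, hy, hxy⟩ := h g x hg hx ((hconv Q rfl).congr hXg .rfl)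
    exact ⟨hx, y, hy, hxy⟩
  · intro h X x hX hx hconv
    obtain ⟨-, y, hy, hxy⟩ :=
      h X x (fun n => subset_jSat h𝒞 (hX n)) hx (by rintro _ rfl; exact hconv)
    exact ⟨y, hy, hxy⟩

lemma Solid.indicator_mem (hsolid : Solid 𝔓 𝒞) (h𝒞 : 𝒞 ⊆ L0 Ω) {f : Ω → ℝ} (hf : f ∈ 𝒞)
    {S : Set Ω} (hS : MeasurableSet S) : S.indicator f ∈ 𝒞 := by
  rcases hsolid with hsolid | ⟨hpos, hsolid⟩
  · refine hsolid f hf _ ((h𝒞 hf).indicator hS) fun P _ => ae_of_all _ fun ω => ?_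
    by_cases hω : ω ∈ S <;> simp [hω]
  · have hf0 := (hpos hf).2
    refine hsolid f hf _ ⟨(h𝒞 hf).indicator hS, fun P hP => ?_⟩ fun P hP => ?_
    all_goals
      filter_upwards [hf0 P hP] with ω hω
      by_cases hωS : ω ∈ S <;> simp_all

lemma SeqOrderClosed.jSat (hsolid : Solid 𝔓 𝒞) (h𝒞 : 𝒞 ⊆ L0 Ω) (h : SeqOrderClosed 𝔓 𝒞) :
    SeqOrderClosed {Q} (jSat Q 𝒞) := by
  intro X x hX hx hconv
  choose g hg hXg using fun n => (hX n).2
  have hgx : ∀ᵐ ω ∂Q, Tendsto (fun n => g n ω) atTop (nhds (x ω)) := by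
    filter_upwards [hconv.ae_tendsto, ae_all_iff.2 hXg] with ω hω hXgω
    simpa only [hXgω] using hω
  obtain ⟨S, hSae, hS, hSconv⟩ := hgx.exists_measurable_mem
  have hconvS : ∀ ω, Tendsto (fun n => S.indicator (g n) ω) atTop (nhds (S.indicator x ω)) := by
    intro ω
    by_cases hω : ω ∈ S
    · simpa [hω] using hSconv ω hω
    · simp [hω]
  refine ⟨hx, S.indicator x, h _ _ (fun n => hsolid.indicator_mem h𝒞 (hg n) hS)
    (hx.indicator hS) (seqOrderConv_of_ae_tendsto (fun n => (h𝒞 (hg n)).indicator hS)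
      (hx.indicator hS) fun P _ => ae_of_all _ hconvS), ?_⟩
  filter_upwards [hSae] with ω hω
  simp [hω]

end Closedness

section Transfer

variable {𝔓 : Set (Measure Ω)} {Q : Measure Ω}

lemma AC.ae_le_of_qsle (hQ : AC 𝔓 Q) {f g : Ω → ℝ} (hf : Measurable f) (hg : Measurable g)
    (h : QSLe 𝔓 f g) : f ≤ᵐ[Q] g :=
  hQ _ (measurableSet_le hf hg).compl h

/-- Off the support `S` of `Q`, `S.piecewise g f` stays below `Y` without any help from `Q`. -/
lemma IsQSInf.singleton_of_supported (hQ : AC 𝔓 Q) (hsupp : SupportedMeasure 𝔓 Q)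
    {ι : Sort*} {Y : ι → Ω → ℝ} {f : Ω → ℝ} (hY : ∀ a, Measurable (Y a)) (hf : Measurable f)
    (h : IsQSInf 𝔓 Y f) : IsQSInf {Q} Y f := by
  classical
  obtain ⟨S, hS, hQS, hnull⟩ := hsupp
  refine ⟨fun a => qsle_singleton.2 (hQ.ae_le_of_qsle hf (hY a) (h.1 a)), fun g hg hgY => ?_⟩
  have hpiece_le : ∀ a, QSLe 𝔓 (S.piecewise g f) (Y a) := by
    intro a P hP
    have hN : MeasurableSet {ω | ¬g ω ≤ Y a ω} := by
      simpa only [not_le] using measurableSet_lt (hY a) hg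
    have hPN : P ({ω | ¬g ω ≤ Y a ω} ∩ S) = 0 :=
      hnull _ hN (measure_mono_null inter_subset_left (hgY a Q rfl)) P hP
    filter_upwards [measure_eq_zero_iff_ae_notMem.1 hPN, h.1 a P hP] with ω hω hfω
    by_cases hωS : ω ∈ S
    · simpa [hωS] using hω
    · simpa [hωS] using hfω
  have hpiece := hQ.ae_le_of_qsle (hg.piecewise hS hf) hf (h.2 _ (hg.piecewise hS hf) hpiece_le)
  refine qsle_singleton.2 ?_
  filter_upwards [hpiece, measure_eq_zero_iff_ae_notMem.1 hQS] with ω hω hωS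
  simpa [not_not.1 hωS] using hω

lemma netOrderConvTransfer_of_supported (hQ : AC 𝔓 Q) (hsupp : SupportedMeasure 𝔓 Q) :
    NetOrderConvTransfer 𝔓 Q := by
  intro ι _ _ _ X x hX hx ⟨Y, hY, hanti, hinf, hdom⟩
  exact ⟨Y, hY, fun a b hab => qsle_singleton.2 (hQ.ae_le_of_qsle (hY b) (hY a) (hanti a b hab)),
    hinf.singleton_of_supported hQ hsupp hY measurable_const,
    fun a => qsle_singleton.2 (hQ.ae_le_of_qsle ((hX a).sub hx).abs (hY a) (hdom a))⟩

end Transfer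

section Reduction

variable {𝔓 𝒬 : Set (Measure Ω)} {𝒞 : Set (Ω → ℝ)}

lemma IsReductionSet.mem_of_forall_mem_jSat (hred : IsReductionSet 𝔓 𝒬 𝒞) {f : Ω → ℝ}
    (h : ∀ Q ∈ 𝒬, f ∈ jSat Q 𝒞) : f ∈ 𝒞 := by
  rw [hred.2.2]
  exact mem_iInter₂.2 h

lemma IsReductionSet.qClosedSet (hred : IsReductionSet 𝔓 𝒬 𝒞) (h𝒞 : 𝒞 ⊆ L0 Ω)
    (h : ∀ Q ∈ 𝒬, QClosedSet {Q} (jSat Q 𝒞)) : QClosedSet 𝒬 𝒞 :=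
  fun X x hX hx hconv => hred.mem_of_forall_mem_jSat fun Q hQ =>
    h Q hQ X x (fun n => subset_jSat h𝒞 (hX n)) hx (by rintro _ rfl; exact hconv _ hQ)

lemma IsReductionSet.orderClosed (hred : IsReductionSet 𝔓 𝒬 𝒞) (h𝒞 : 𝒞 ⊆ L0 Ω)
    (hsupp : ∀ Q ∈ 𝒬, SupportedMeasure 𝔓 Q) (h : ∀ Q ∈ 𝒬, SeqOrderClosed {Q} (jSat Q 𝒞)) :
    OrderClosed 𝔓 𝒞 := by
  intro ι _ _ _ X x hX hx hconv
  refine hred.mem_of_forall_mem_jSat fun Q hQ => ?_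
  have : IsProbabilityMeasure Q := (hred.2.1 hQ).1
  exact orderClosed_singleton_iff.2 (h Q hQ) ι X x (fun a => subset_jSat h𝒞 (hX a)) hx
    (netOrderConvTransfer_of_supported (hred.2.1 hQ).2 (hsupp Q hQ) ι X x
      (fun a => h𝒞 (hX a)) hx hconv)

lemma QClosedSet.seqOrderClosed (h𝒬 : 𝒬 ⊆ PC 𝔓) (hsupp : ∀ Q ∈ 𝒬, SupportedMeasure 𝔓 Q)
    (h𝒞 : 𝒞 ⊆ L0 Ω) (h : QClosedSet 𝒬 𝒞) : SeqOrderClosed 𝔓 𝒞 := by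
  intro X x hX hx hconv
  refine h X x hX hx fun Q hQ => ?_
  have : IsProbabilityMeasure Q := (h𝒬 hQ).1
  have hconvQ : SeqOrderConv {Q} X x :=
    netOrderConvTransfer_of_supported (h𝒬 hQ).2 (hsupp Q hQ) ℕ X x (fun n => h𝒞 (hX n)) hx hconv
  exact tendstoInMeasure_of_tendsto_ae (fun n => (h𝒞 (hX n)).aestronglyMeasurable)
    hconvQ.ae_tendsto

lemma orderClosed_iff_seqOrderClosed (hsolid : Solid 𝔓 𝒞) (h𝒞 : 𝒞 ⊆ L0 Ω)
    (hred : IsReductionSet 𝔓 𝒬 𝒞) (hsupp : ∀ Q ∈ 𝒬, SupportedMeasure 𝔓 Q) :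
    OrderClosed 𝔓 𝒞 ↔ SeqOrderClosed 𝔓 𝒞 :=
  ⟨OrderClosed.seqOrderClosed, fun h => hred.orderClosed h𝒞 hsupp fun _ _ => h.jSat hsolid h𝒞⟩

end Reduction

theorem stmt11_general {Ω : Type*} [MeasurableSpace Ω]
    (𝔓 : Set (Measure Ω))
    (𝒞 : Set (Ω → ℝ)) (h𝒞 : IsL0Set 𝔓 𝒞) (hsolid : Solid 𝔓 𝒞)
    (𝒬 : Set (Measure Ω)) (hred : IsReductionSet 𝔓 𝒬 𝒞)
    (hsupp : ∀ Q ∈ 𝒬, SupportedMeasure 𝔓 Q) :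
    (OrderClosed 𝔓 𝒞 ↔ SeqOrderClosed 𝔓 𝒞) ∧
    (OrderClosed 𝔓 𝒞 ↔ QClosedSet 𝒬 𝒞) ∧
    (OrderClosed 𝔓 𝒞 ↔ ∀ Q ∈ 𝒬, LocallyQClosed Q 𝒞) ∧
    (OrderClosed 𝔓 𝒞 ↔ ∀ Q ∈ 𝒬, QClosedSet {Q} (jSat Q 𝒞)) ∧
    (OrderClosed 𝔓 𝒞 ↔ ∀ Q ∈ 𝒬, OrderClosed {Q} (jSat Q 𝒞)) ∧
    (OrderClosed 𝔓 𝒞 ↔ ∀ Q ∈ 𝒬, SeqOrderClosed {Q} (jSat Q 𝒞)) := by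
  have hprob : ∀ Q ∈ 𝒬, IsProbabilityMeasure Q := fun Q hQ => (hred.2.1 hQ).1
  have h : List.TFAE [SeqOrderClosed 𝔓 𝒞, QClosedSet 𝒬 𝒞, ∀ Q ∈ 𝒬, LocallyQClosed Q 𝒞,
      ∀ Q ∈ 𝒬, QClosedSet {Q} (jSat Q 𝒞), ∀ Q ∈ 𝒬, SeqOrderClosed {Q} (jSat Q 𝒞)] := by
    tfae_have 1 → 5 := fun h Q _ => h.jSat hsolid h𝒞.1
    tfae_have 4 ↔ 5 := forall₂_congr fun Q hQ =>
      have := hprob Q hQ; qClosedSet_singleton_iff jSat_subset_L0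
    tfae_have 3 ↔ 4 := forall₂_congr fun Q _ => locallyQClosed_iff h𝒞.1
    tfae_have 4 → 2 := hred.qClosedSet h𝒞.1
    tfae_have 2 → 1 := QClosedSet.seqOrderClosed hred.2.1 hsupp h𝒞.1
    tfae_finish
  -- each `OrderClosed` of the statement quantifies over nets in its own universe
  refine ⟨?_, ?_, ?_, ?_, ?_, ?_⟩ <;> rw [orderClosed_iff_seqOrderClosed hsolid h𝒞.1 hred hsupp]
  exacts [h.out 0 1, h.out 0 2, h.out 0 3, (h.out 0 4).trans <| .symm <|
    forall₂_congr fun Q hQ => have := hprob Q hQ; orderClosed_singleton_iff, h.out 0 4]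

/-- Equivalent notions of closedness for solid `𝒫`-sensitive sets
with a supported reduction set, including order closedness. -/
theorem stmt11 {Ω : Type*} [MeasurableSpace Ω]
    (𝔓 : Set (Measure Ω)) (h𝔓ne : 𝔓.Nonempty)
    (h𝔓prob : ∀ P ∈ 𝔓, IsProbabilityMeasure P)
    (𝒞 : Set (Ω → ℝ)) (h𝒞 : IsL0Set 𝔓 𝒞) (hsolid : Solid 𝔓 𝒞)
    (𝒬 : Set (Measure Ω)) (hred : IsReductionSet 𝔓 𝒬 𝒞)
    (hsupp : ∀ Q ∈ 𝒬, SupportedMeasure 𝔓 Q) :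
    (OrderClosed 𝔓 𝒞 ↔ SeqOrderClosed 𝔓 𝒞) ∧
    (OrderClosed 𝔓 𝒞 ↔ QClosedSet 𝒬 𝒞) ∧
    (OrderClosed 𝔓 𝒞 ↔ ∀ Q ∈ 𝒬, LocallyQClosed Q 𝒞) ∧
    (OrderClosed 𝔓 𝒞 ↔ ∀ Q ∈ 𝒬, QClosedSet {Q} (jSat Q 𝒞)) ∧
    (OrderClosed 𝔓 𝒞 ↔ ∀ Q ∈ 𝒬, OrderClosed {Q} (jSat Q 𝒞)) ∧
    (OrderClosed 𝔓 𝒞 ↔ ∀ Q ∈ 𝒬, SeqOrderClosed {Q} (jSat Q 𝒞)) :=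
  stmt11_general 𝔓 𝒞 h𝒞 hsolid 𝒬 hred hsupp

end Robust
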